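/- For every integer k ≥ 2 and every positive integer d, the limit as N → ∞ of |{ t ∈ T(N,k) : gcd(t_1, …, t_k) = d }| / binomial(N,k) equals d^{-k} · ζ(k)^{-1}, where ζ(k) = ∑_{n=1}^∞ n^{-k}. -/

import Mathlib

open Filter

/-- The space of `k`-event signals: `k` inter-event intervals, each at least 1,
summing to at most `N`. -/
def SignalSpace (N k : ℕ) : Finset (Fin k → ℕ) :=
  (Fintype.piFinset fun _ => Finset.Icc 1 N).filter fun t => ∑ i, t i ≤ N

/-- `ζ(k) = ∑_{n=1}^∞ n^{-k}`. -/
noncomputable def zetaSum (k : ℕ) : ℝ := ∑' n : ℕ, (1 : ℝ) / ((n : ℝ) + 1) ^ k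

/-!
Scaling by `d` identifies the signals all of whose intervals are divisible by `d` with
`SignalSpace (N / d) k`, which has `(N / d).choose k` elements (stars and bars). Möbius inversion
over the gcd then gives `#{t | gcd t = d} = ∑ₑ μ(e) · C(⌊N / (d e)⌋, k)`. Each ratio
`C(⌊N / m⌋, k) / C(N, k)` tends to `m⁻ᵏ` and is bounded by it, so by dominated convergence the
density tends to `d⁻ᵏ ∑ₑ μ(e) e⁻ᵏ = d⁻ᵏ / ζ(k)`.
-/

open Finset Asymptotics Topology
open scoped Nat ArithmeticFunction.Moebius LSeries.notation

lemma mem_signalSpace {N k : ℕ} {t : Fin k → ℕ} :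
    t ∈ SignalSpace N k ↔ (∀ i, 0 < t i) ∧ ∑ i, t i ≤ N := by
  simp only [SignalSpace, mem_filter, Fintype.mem_piFinset, mem_Icc]
  refine ⟨fun h ↦ ⟨fun i ↦ (h.1 i).1, h.2⟩, fun h ↦ ⟨fun i ↦ ⟨h.1 i, ?_⟩, h.2⟩⟩
  exact (single_le_sum (fun j _ ↦ Nat.zero_le (t j)) (mem_univ i)).trans h.2

lemma signalSpace_zero_right (N : ℕ) : SignalSpace N 0 = {finZeroElim} := by
  ext t
  simp [mem_signalSpace, Subsingleton.elim t finZeroElim]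

lemma signalSpace_zero_left (k : ℕ) : SignalSpace 0 (k + 1) = ∅ := by
  ext t
  simp only [mem_signalSpace, nonpos_iff_eq_zero, sum_eq_zero_iff, mem_univ, true_implies,
    notMem_empty, iff_false, not_and]
  exact fun hpos hzero ↦ (hpos 0).ne' (hzero 0)

/-- Dropping the first interval identifies the signals of total length exactly `N + 1` with
`SignalSpace N k`. -/
lemma card_filter_sum_eq_signalSpace (N k : ℕ) :
    #{t ∈ SignalSpace (N + 1) (k + 1) | ∑ i, t i = N + 1} = #(SignalSpace N k) := by
  refine card_nbij' Fin.tail (fun s ↦ Fin.cons (N + 1 - ∑ i, s i) s) ?_ ?_ ?_ ?_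
  · intro t ht
    simp only [coe_filter, Set.mem_ofPred_eq, mem_signalSpace, Fin.sum_univ_succ] at ht
    simp only [mem_coe, mem_signalSpace]
    exact ⟨fun i ↦ ht.1.1 i.succ, by have := ht.1.1 0; simp only [Fin.tail]; omega⟩
  · intro s hs
    simp only [mem_coe, mem_signalSpace] at hs
    simp only [coe_filter, Set.mem_ofPred_eq, mem_signalSpace, Fin.sum_cons, Fin.forall_fin_succ,
      Fin.cons_zero, Fin.cons_succ]
    exact ⟨⟨⟨by omega, hs.1⟩, by omega⟩, by omega⟩
  · intro t ht
    simp only [coe_filter, Set.mem_ofPred_eq, Fin.sum_univ_succ] at ht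
    simp only [Fin.tail]
    conv_rhs => rw [← Fin.cons_self_tail t]
    congr 1
    omega
  · intro s _
    exact Fin.tail_cons _ _

theorem card_signalSpace : ∀ N k : ℕ, #(SignalSpace N k) = N.choose k
  | N, 0 => by simp [signalSpace_zero_right]
  | 0, k + 1 => by simp [signalSpace_zero_left]
  | N + 1, k + 1 => by
    have hle : {t ∈ SignalSpace (N + 1) (k + 1) | ∑ i, t i ≤ N} = SignalSpace N (k + 1) := by
      ext t
      simp only [mem_filter, mem_signalSpace]
      exact ⟨fun h ↦ ⟨h.1.1, h.2⟩, fun h ↦ ⟨⟨h.1, by omega⟩, h.2⟩⟩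
    have heq : {t ∈ SignalSpace (N + 1) (k + 1) | ¬∑ i, t i ≤ N} =
        {t ∈ SignalSpace (N + 1) (k + 1) | ∑ i, t i = N + 1} := by
      refine filter_congr fun t ht ↦ ?_
      have := (mem_signalSpace.1 ht).2
      omega
    rw [← card_filter_add_card_filter_not (fun t ↦ ∑ i, t i ≤ N), hle, heq,
      card_filter_sum_eq_signalSpace, card_signalSpace, card_signalSpace, Nat.choose_succ_succ',
      add_comm]

lemma smul_mem_signalSpace_iff {N k d : ℕ} (hd : 0 < d) {s : Fin k → ℕ} :
    d • s ∈ SignalSpace N k ↔ s ∈ SignalSpace (N / d) k := by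
  simp only [mem_signalSpace, Pi.smul_apply, smul_eq_mul, ← sum_mul, Nat.le_div_iff_mul_le hd,
    mul_comm d, Nat.mul_pos_iff_of_pos_right hd]

lemma filter_dvd_gcd_signalSpace {N k d : ℕ} (hd : 0 < d) :
    {t ∈ SignalSpace N k | d ∣ univ.gcd t} =
      (SignalSpace (N / d) k).map ⟨(d • ·), smul_right_injective _ hd.ne'⟩ := by
  ext t
  simp only [mem_filter, Finset.mem_map, Function.Embedding.coeFn_mk]
  constructor
  · rintro ⟨ht, hdvd⟩
    have hdiv : d • (fun i ↦ t i / d) = t :=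
      funext fun i ↦ Nat.mul_div_cancel' (dvd_gcd_iff.1 hdvd i (mem_univ i))
    exact ⟨_, (smul_mem_signalSpace_iff hd).1 (by rwa [hdiv]), hdiv⟩
  · rintro ⟨s, hs, rfl⟩
    exact ⟨(smul_mem_signalSpace_iff hd).2 hs, dvd_gcd fun i _ ↦ dvd_mul_right d (s i)⟩

lemma card_filter_dvd_gcd_signalSpace {N k d : ℕ} (hd : 0 < d) :
    #{t ∈ SignalSpace N k | d ∣ univ.gcd t} = (N / d).choose k := by
  rw [filter_dvd_gcd_signalSpace hd, card_map, card_signalSpace]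

lemma card_filter_gcd_eq_signalSpace {N k d : ℕ} (hd : 0 < d) :
    #{t ∈ SignalSpace N k | univ.gcd t = d} = #{s ∈ SignalSpace (N / d) k | univ.gcd s = 1} := by
  have hfilter : {t ∈ SignalSpace N k | univ.gcd t = d} =
      {t ∈ {t ∈ SignalSpace N k | d ∣ univ.gcd t} | univ.gcd t = d} := by
    rw [filter_filter]
    exact filter_congr fun t _ ↦ ⟨fun h ↦ ⟨h ▸ dvd_rfl, h⟩, And.right⟩
  rw [hfilter, filter_dvd_gcd_signalSpace hd, filter_map, card_map]
  congr 1
  refine filter_congr fun s _ ↦ ?_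
  rw [Function.comp_apply, Function.Embedding.coeFn_mk, show d • s = fun i ↦ d * s i from rfl,
    Finset.gcd_mul_left, normalize_eq, Nat.mul_eq_left hd.ne']

lemma sum_divisors_moebius (n : ℕ) : ∑ e ∈ n.divisors, (μ e : ℤ) = if n = 1 then 1 else 0 := by
  simpa only [ArithmeticFunction.coe_mul_zeta_apply, ArithmeticFunction.one_apply] using
    congr($ArithmeticFunction.moebius_mul_coe_zeta n)

lemma gcd_mem_Icc_of_mem_signalSpace {N k : ℕ} (hk : k ≠ 0) {t : Fin k → ℕ}
    (ht : t ∈ SignalSpace N k) : univ.gcd t ∈ Icc 1 N := by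
  obtain ⟨hpos, hsum⟩ := mem_signalSpace.1 ht
  let i₀ : Fin k := ⟨0, Nat.pos_of_ne_zero hk⟩
  have hdvd : univ.gcd t ∣ t i₀ := gcd_dvd (mem_univ i₀)
  have hle : t i₀ ≤ N := (single_le_sum (fun j _ ↦ Nat.zero_le (t j)) (mem_univ i₀)).trans hsum
  exact mem_Icc.2 ⟨Nat.pos_of_dvd_of_pos hdvd (hpos i₀), (Nat.le_of_dvd (hpos i₀) hdvd).trans hle⟩

/-- Möbius inversion over the common divisors of the intervals. -/
lemma card_filter_gcd_eq_one_signalSpace {k : ℕ} (hk : k ≠ 0) (N : ℕ) :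
    (#{t ∈ SignalSpace N k | univ.gcd t = 1} : ℤ) = ∑ e ∈ Icc 1 N, μ e * (N / e).choose k := by
  have hdivisors : ∀ t ∈ SignalSpace N k,
      (univ.gcd t).divisors = {e ∈ Icc 1 N | e ∣ univ.gcd t} := by
    intro t ht
    have hgcd := mem_Icc.1 (gcd_mem_Icc_of_mem_signalSpace hk ht)
    ext e
    simp only [Nat.mem_divisors, mem_filter, mem_Icc]
    constructor
    · rintro ⟨hdvd, -⟩
      exact ⟨⟨Nat.pos_of_dvd_of_pos hdvd hgcd.1, (Nat.le_of_dvd hgcd.1 hdvd).trans hgcd.2⟩, hdvd⟩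
    · rintro ⟨-, hdvd⟩
      exact ⟨hdvd, by omega⟩
  calc (#{t ∈ SignalSpace N k | univ.gcd t = 1} : ℤ)
      = ∑ t ∈ SignalSpace N k, ∑ e ∈ (univ.gcd t).divisors, (μ e : ℤ) := by
        simp only [natCast_card_filter, sum_divisors_moebius]
    _ = ∑ t ∈ SignalSpace N k, ∑ e ∈ Icc 1 N, μ e * if e ∣ univ.gcd t then 1 else 0 := by
        refine sum_congr rfl fun t ht ↦ ?_
        simp only [mul_boole, ← sum_filter, hdivisors t ht]
    _ = ∑ e ∈ Icc 1 N, μ e * (N / e).choose k := by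
        rw [sum_comm]
        refine sum_congr rfl fun e he ↦ ?_
        rw [← mul_sum, sum_boole, card_filter_dvd_gcd_signalSpace (mem_Icc.1 he).1]

-- The sum runs over all of `ℕ`: the term `e = 0` vanishes since `μ 0 = 0`.
lemma card_filter_gcd_eq_tsum {k d : ℕ} (hk : k ≠ 0) (hd : 0 < d) (N : ℕ) :
    (#{t ∈ SignalSpace N k | univ.gcd t = d} : ℝ) =
      ∑' e : ℕ, (μ e : ℝ) * (N / (d * e)).choose k := by
  have hvanish : ∀ e ∉ Icc 1 (N / d), (μ e : ℝ) * (N / (d * e)).choose k = 0 := by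
    intro e he
    rcases e.eq_zero_or_pos with rfl | he0
    · simp
    have hlt : N / d < e := by simp only [mem_Icc, not_and, not_le] at he; exact he he0
    rw [← Nat.div_div_eq_div_mul, Nat.div_eq_of_lt hlt, Nat.choose_eq_zero_of_lt (by omega),
      Nat.cast_zero, mul_zero]
  have hmoebius := congrArg (Int.cast : ℤ → ℝ) (card_filter_gcd_eq_one_signalSpace hk (N / d))
  push_cast at hmoebius
  rw [tsum_eq_sum hvanish, card_filter_gcd_eq_signalSpace hd, hmoebius]
  simp_rw [Nat.div_div_eq_div_mul]

lemma Nat.descFactorial_mul_pow_le {a m n : ℕ} (h : a * m ≤ n) :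
    ∀ k, a.descFactorial k * m ^ k ≤ n.descFactorial k
  | 0 => by simp
  | k + 1 => by
    have hstep : (a - k) * m ≤ n - k := by
      rcases Nat.eq_zero_or_pos m with rfl | hm
      · simp
      · have : k ≤ k * m := Nat.le_mul_of_pos_right k hm
        rw [Nat.sub_mul]
        omega
    calc a.descFactorial (k + 1) * m ^ (k + 1)
        = (a - k) * m * (a.descFactorial k * m ^ k) := by
          rw [Nat.descFactorial_succ, pow_succ]; ring
      _ ≤ (n - k) * n.descFactorial k :=
          Nat.mul_le_mul hstep (Nat.descFactorial_mul_pow_le h k)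
      _ = n.descFactorial (k + 1) := (Nat.descFactorial_succ n k).symm

lemma Nat.choose_mul_pow_le {a m n : ℕ} (h : a * m ≤ n) (k : ℕ) :
    a.choose k * m ^ k ≤ n.choose k := by
  refine Nat.le_of_mul_le_mul_left ?_ k.factorial_pos
  rw [← mul_assoc, ← Nat.descFactorial_eq_factorial_mul_choose,
    ← Nat.descFactorial_eq_factorial_mul_choose]
  exact Nat.descFactorial_mul_pow_le h k

lemma choose_div_div_choose_le (N k : ℕ) {m : ℕ} (hm : 0 < m) :
    ((N / m).choose k : ℝ) / N.choose k ≤ ((m : ℝ) ^ k)⁻¹ := by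
  refine div_le_of_le_mul₀ (Nat.cast_nonneg _) (by positivity) ?_
  rw [← div_eq_inv_mul, le_div_iff₀ (by positivity)]
  exact_mod_cast Nat.choose_mul_pow_le (Nat.div_mul_le_self N m) k

lemma isEquivalent_natCast_div {m : ℕ} (hm : 0 < m) :
    (fun N : ℕ ↦ ((N / m : ℕ) : ℝ)) ~[atTop] fun N ↦ (N : ℝ) / m := by
  have h := tendsto_nat_floor_div_atTop.comp
    (tendsto_natCast_atTop_atTop.atTop_div_const (r := (m : ℝ)) (by positivity))
  simp only [Function.comp_def, Nat.floor_div_eq_div] at h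
  exact isEquivalent_of_tendsto_one h

lemma tendsto_choose_div_div_choose (k : ℕ) {m : ℕ} (hm : 0 < m) :
    Tendsto (fun N : ℕ ↦ ((N / m).choose k : ℝ) / N.choose k) atTop (𝓝 ((m : ℝ) ^ k)⁻¹) := by
  have hnum : (fun N : ℕ ↦ ((N / m).choose k : ℝ)) ~[atTop] fun N ↦ ((N : ℝ) / m) ^ k / k ! :=
    ((isEquivalent_choose k).comp_tendsto (Nat.tendsto_div_const_atTop hm.ne')).trans
      (((isEquivalent_natCast_div hm).pow k).div IsEquivalent.refl)
  have hlim : Tendsto (fun N : ℕ ↦ ((N : ℝ) / m) ^ k / k ! / ((N : ℝ) ^ k / k !)) atTop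
      (𝓝 ((m : ℝ) ^ k)⁻¹) := by
    refine tendsto_const_nhds.congr' ?_
    filter_upwards [eventually_ne_atTop 0] with N hN
    rw [div_pow]
    field_simp
  exact (hnum.div (isEquivalent_choose k)).symm.tendsto_nhds hlim

lemma tsum_moebius_div_pow {k : ℕ} (hk : 1 < k) :
    ∑' n : ℕ, (μ n : ℝ) / (n : ℝ) ^ k = (zetaSum k)⁻¹ := by
  have hs : 1 < (k : ℂ).re := by simpa using (Nat.one_lt_cast.2 hk : (1 : ℝ) < k)
  have hzeta : ((zetaSum k : ℝ) : ℂ) = riemannZeta k := by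
    rw [zetaSum, Complex.ofReal_tsum, zeta_eq_tsum_one_div_nat_add_one_cpow hs]
    push_cast
    simp only [Complex.cpow_natCast]
  have hmoebius : ((∑' n : ℕ, (μ n : ℝ) / (n : ℝ) ^ k : ℝ) : ℂ) = L ↗μ k := by
    rw [Complex.ofReal_tsum, LSeries]
    refine tsum_congr fun n ↦ ?_
    rcases eq_or_ne n 0 with rfl | hn
    · simp
    · simp [LSeries.term_of_ne_zero hn, Complex.cpow_natCast]
  have h := LSeries_one_mul_Lseries_moebius hs
  rw [LSeries_one_eq_riemannZeta hs, ← hzeta, ← hmoebius, ← Complex.ofReal_mul,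
    ← Complex.ofReal_one] at h
  exact eq_inv_of_mul_eq_one_right (Complex.ofReal_injective h)

lemma tendsto_tsum_moebius_mul_choose_div_choose {k d : ℕ} (hk : 1 < k) (hd : 0 < d) :
    Tendsto (fun N : ℕ ↦ ∑' e : ℕ, (μ e : ℝ) * (((N / (d * e)).choose k : ℝ) / N.choose k))
      atTop (𝓝 (((d : ℝ) ^ k)⁻¹ * (zetaSum k)⁻¹)) := by
  have hsummable : Summable fun e : ℕ ↦ (((d * e : ℕ) : ℝ) ^ k)⁻¹ := by
    push_cast
    simp_rw [mul_pow, mul_inv]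
    exact (Real.summable_nat_pow_inv.2 hk).mul_left _
  have hterm (e : ℕ) :
      Tendsto (fun N : ℕ ↦ (μ e : ℝ) * (((N / (d * e)).choose k : ℝ) / N.choose k)) atTop
        (𝓝 ((μ e : ℝ) * (((d * e : ℕ) : ℝ) ^ k)⁻¹)) := by
    rcases e.eq_zero_or_pos with rfl | he
    · simp
    · exact (tendsto_choose_div_div_choose k (Nat.mul_pos hd he)).const_mul _
  have hbound (N e : ℕ) :
      ‖(μ e : ℝ) * (((N / (d * e)).choose k : ℝ) / N.choose k)‖ ≤ (((d * e : ℕ) : ℝ) ^ k)⁻¹ := by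
    rcases e.eq_zero_or_pos with rfl | he
    · simp
    have hμ : ‖(μ e : ℝ)‖ ≤ 1 := by
      rw [Real.norm_eq_abs, ← Int.cast_abs]
      exact_mod_cast ArithmeticFunction.abs_moebius_le_one
    have hratio : ‖((N / (d * e)).choose k : ℝ) / N.choose k‖ ≤ (((d * e : ℕ) : ℝ) ^ k)⁻¹ := by
      rw [Real.norm_of_nonneg (by positivity)]
      exact choose_div_div_choose_le N k (Nat.mul_pos hd he)
    rw [norm_mul]
    exact (mul_le_mul hμ hratio (norm_nonneg _) zero_le_one).trans_eq (one_mul _)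
  convert tendsto_tsum_of_dominated_convergence hsummable hterm (Eventually.of_forall hbound)
  rw [← tsum_moebius_div_pow hk, ← tsum_mul_left]
  refine tsum_congr fun e ↦ ?_
  push_cast
  ring

theorem gcd_fiber_density (k : ℕ) (hk : 2 ≤ k) (d : ℕ) (hd : 0 < d) :
    Tendsto
      (fun N : ℕ =>
        (((SignalSpace N k).filter fun t => Finset.univ.gcd t = d).card : ℝ) /
          (N.choose k : ℝ))
      atTop (nhds (((d : ℝ) ^ k)⁻¹ * (zetaSum k)⁻¹)) := by
  refine (tendsto_tsum_moebius_mul_choose_div_choose hk hd).congr fun N ↦ ?_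
  rw [card_filter_gcd_eq_tsum (by omega) hd, ← tsum_div_const]
  simp_rw [mul_div_assoc]
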